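/- Let τ belong to class 𝒯, with constants α ∈ (0,1) and D > 0 such that ‖P_τ f‖_∞ ≤ α‖f‖_∞ + D‖f‖_1 for all nonnegative non-increasing f ∈ L¹ ∩ L^∞, and set K = 1 + D/(1−α). Let S = ⋃_{n≥0} τ^{-n}({a_i, b_i : i≥1}). Then for every probability density f on I that is a finite nonnegative linear combination f = Σ_{j=1}^N c_j χ_{Δ_j} of indicator functions of intervals Δ_j whose endpoints belong to S, there exists n₁ ∈ ℕ such that for all n ≥ n₁, P_τ^n f(x) ≥ (1/2)·χ_{[0,1/(2K)]}(x) for all x ∈ I; i.e., h = (1/2)·χ_{[0,1/(2K)]} is a lower function for P_τ. -/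

import Mathlib

open Set Filter MeasureTheory Topology

structure PCT where
  τ : ℝ → ℝ
  a : ℕ → ℝ
  b : ℕ → ℝ
  da : ℕ → ℝ
  maps_to : Set.MapsTo τ (Set.Icc 0 1) (Set.Icc 0 1)
  lt : ∀ i, a i < b i
  sub : ∀ i, Set.Ioo (a i) (b i) ⊆ Set.Icc (0:ℝ) 1
  disj : Pairwise (Function.onFun Disjoint fun i => Set.Ioo (a i) (b i))
  null : volume (Set.Icc (0:ℝ) 1 \ ⋃ i, Set.Ioo (a i) (b i)) = 0
  mono : ∀ i, StrictMonoOn τ (Set.Ioo (a i) (b i))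
  conv : ∀ i, ConvexOn ℝ (Set.Ioo (a i) (b i)) τ
  diff : ∀ i, ∀ x ∈ Set.Ioo (a i) (b i), DifferentiableAt ℝ τ x
  lim_zero : ∀ i, Filter.Tendsto τ (nhdsWithin (a i) (Set.Ioi (a i))) (nhds 0)
  deriv_lim : ∀ i, Filter.Tendsto (deriv τ) (nhdsWithin (a i) (Set.Ioi (a i))) (nhds (da i))
  da_pos : ∀ i, 0 < da i
  sum_inv : Summable (fun i => 1 / da i)
  expand : (¬ AccPt (0:ℝ) (Filter.principal (Set.range a))) → ∃ i, a i = 0 ∧ 1 < da i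

/-- The interval `(c,d)` follows a single sequence of branches under the first `n`
iterates of `τ`. -/
def IsBranchSeq (T : PCT) (n : ℕ) (c d : ℝ) : Prop :=
  c < d ∧ ∀ k < n, ∃ i, T.τ^[k] '' Set.Ioo c d ⊆ Set.Ioo (T.a i) (T.b i)

/-- `(c,d)` is a maximal open interval on which `τ^n` is a single monotone branch,
i.e. an element of the partition `𝒫⁽ⁿ⁾`. -/
def IsBranchInterval (T : PCT) (n : ℕ) (c d : ℝ) : Prop :=
  IsBranchSeq T n c d ∧
    ∀ c' d', c' ≤ c → d ≤ d' → IsBranchSeq T n c' d' → c' = c ∧ d' = d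

/-!
Write `F_g t = ∫ x in 0..t, g x`. For `t ∈ [0, 1]` the defining identity of `P` gives
`F_{P g} t = ∑ᵢ (F_g (σᵢ t) - F_g (aᵢ))`, where `σᵢ` is the inverse of the convex increasing
branch `τᵢ` and is therefore concave and increasing. Hence `F_{P g}` is concave on every interval
avoiding the `τ`-images of those kinks of `F_g` that lie inside a branch. The primitive of the
step function `f` can only have kinks at the left endpoints `pⱼ ∈ S` of its intervals, and the
orbit of each `pⱼ` reaches a partition endpoint, which lies in no branch: the kink is then lost.
So for large `n` the primitive of `Pⁿ f` is concave on `[0, 1]`, i.e. `Pⁿ f` agrees a.e. with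
a non-increasing density. The Lasota–Yorke inequality then applies along the orbit and gives
`‖Pⁿ f‖_∞ ≤ K` eventually. Finally a non-increasing density `h ≤ K` satisfies
`1 ≤ K x + (1 - x) h x`, so `h ≥ 1/2` on `[0, 1/(2K)]`.
-/

theorem ConcaveOn.comp_of_mapsTo {s t : Set ℝ} {f g : ℝ → ℝ} (hg : ConcaveOn ℝ t g)
    (hf : ConcaveOn ℝ s f) (hg' : MonotoneOn g t) (hst : MapsTo f s t) :
    ConcaveOn ℝ s (g ∘ f) :=
  ⟨hf.1, fun _ hx _ hy _ _ ha hb hab =>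
    (hg.2 (hst hx) (hst hy) ha hb hab).trans <|
      hg' (hg.1 (hst hx) (hst hy) ha hb hab) (hst (hf.1 hx hy ha hb hab)) (hf.2 hx hy ha hb hab)⟩

theorem ConcaveOn.of_hasSum {ι E : Type*} [AddCommGroup E] [Module ℝ E] {s : Set E}
    {φ : ι → E → ℝ} {F : E → ℝ} (hs : Convex ℝ s) (hφ : ∀ i, ConcaveOn ℝ s (φ i))
    (hF : ∀ x ∈ s, HasSum (fun i => φ i x) (F x)) : ConcaveOn ℝ s F :=
  ⟨hs, fun x hx y hy a b ha hb hab =>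
    hasSum_le (fun i => (hφ i).2 hx hy ha hb hab)
      (((hF x hx).const_smul a).add ((hF y hy).const_smul b)) (hF _ (hs hx hy ha hb hab))⟩

namespace ConcaveOn

variable {S : Set ℝ} {f : ℝ → ℝ} {x y : ℝ}

theorem differentiableWithinAt_Ioi_of_mem_interior (hfc : ConcaveOn ℝ S f)
    (hx : x ∈ interior S) : DifferentiableWithinAt ℝ f (Ioi x) x := by
  simpa using (hfc.neg.differentiableWithinAt_Ioi_of_mem_interior hx).neg

theorem antitoneOn_rightDeriv (hfc : ConcaveOn ℝ S f) :
    AntitoneOn (fun x => derivWithin f (Ioi x) x) (interior S) := fun x hx y hy hxy => by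
  simpa [derivWithin.neg] using hfc.neg.monotoneOn_rightDeriv hx hy hxy

theorem rightDeriv_le_slope_of_mem_interior (hfc : ConcaveOn ℝ S f) (hx : x ∈ S)
    (hy : y ∈ interior S) (hxy : x < y) : derivWithin f (Ioi y) y ≤ slope f x y := by
  have := (hfc.neg.slope_le_leftDeriv hx (interior_subset hy) hxy
    (hfc.neg.differentiableWithinAt_Iio_of_mem_interior hy)).trans
    (hfc.neg.leftDeriv_le_rightDeriv_of_mem_interior hy)
  simpa [slope_neg, derivWithin.neg] using this

end ConcaveOn

theorem concaveOn_primitive_of_antitoneOn {g : ℝ → ℝ} {u v : ℝ}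
    (hg : LocallyIntegrable g volume) (hanti : AntitoneOn g (Ioo u v)) (c : ℝ) :
    ConcaveOn ℝ (Icc u v) fun t => ∫ x in c..t, g x := by
  have hint : ∀ a b, IntervalIntegrable g volume a b := fun a b =>
    (hg.integrableOn_isCompact isCompact_uIcc).intervalIntegrable
  refine concaveOn_of_slope_anti_adjacent (convex_Icc u v) fun {x y z} hx hz hxy hyz => ?_
  have hy : y ∈ Ioo u v := ⟨hx.1.trans_lt hxy, hyz.trans_le hz.2⟩
  have hleft : (y - x) * g y ≤ ∫ t in x..y, g t := by
    simpa using intervalIntegral.integral_mono_on_of_le_Ioo hxy.le intervalIntegrable_const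
      (hint x y) fun t ht => hanti ⟨hx.1.trans_lt ht.1, ht.2.trans hy.2⟩ hy ht.2.le
  have hright : ∫ t in y..z, g t ≤ (z - y) * g y := by
    simpa using intervalIntegral.integral_mono_on_of_le_Ioo hyz.le (hint y z)
      intervalIntegrable_const fun t ht => hanti hy ⟨hy.1.trans ht.1, ht.2.trans_le hz.2⟩ ht.1.le
  rw [intervalIntegral.integral_interval_sub_left (hint c z) (hint c y),
    intervalIntegral.integral_interval_sub_left (hint c y) (hint c x),
    div_le_div_iff₀ (sub_pos.2 hyz) (sub_pos.2 hxy)]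
  nlinarith [sub_pos.2 hyz, sub_pos.2 hxy]

theorem monotoneOn_primitive {g : ℝ → ℝ} {u v : ℝ} (hg : IntegrableOn g (Icc u v))
    (hg0 : 0 ≤ᵐ[volume.restrict (Icc u v)] g) :
    MonotoneOn (fun t => ∫ x in u..t, g x) (Icc u v) := fun x hx y hy hxy =>
  intervalIntegral.integral_mono_interval le_rfl hx.1 hxy
    (ae_restrict_of_ae_restrict_of_subset (Ioc_subset_Icc_self.trans (Icc_subset_Icc le_rfl hy.2))
      hg0)
    ((intervalIntegrable_iff_integrableOn_Icc_of_le hy.1).2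
      (hg.mono_set (Icc_subset_Icc le_rfl hy.2)))

theorem slope_primitive_mem_Icc {g : ℝ → ℝ} {C : ℝ} (hg : IntegrableOn g (Icc 0 1))
    (hg0 : 0 ≤ᵐ[volume.restrict (Icc 0 1)] g) (hgC : ∀ᵐ x ∂volume.restrict (Icc 0 1), g x ≤ C)
    {a b : ℝ} (ha : a ∈ Icc (0:ℝ) 1) (hb : b ∈ Icc (0:ℝ) 1) (hab : a < b) :
    slope (fun t => ∫ x in 0..t, g x) a b ∈ Icc 0 C := by
  have hint : ∀ {s t : ℝ}, s ∈ Icc (0:ℝ) 1 → t ∈ Icc (0:ℝ) 1 →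
      IntervalIntegrable g volume s t :=
    fun hs ht => (hg.mono_set (uIcc_subset_Icc hs ht)).intervalIntegrable
  have hsub : Icc a b ⊆ Icc 0 1 := Icc_subset_Icc ha.1 hb.2
  rw [slope_def_field, intervalIntegral.integral_interval_sub_left
    (hint (left_mem_Icc.2 zero_le_one) hb) (hint (left_mem_Icc.2 zero_le_one) ha)]
  refine ⟨div_nonneg (intervalIntegral.integral_nonneg_of_ae_restrict hab.le
    (ae_restrict_of_ae_restrict_of_subset hsub hg0)) (sub_nonneg.2 hab.le), ?_⟩
  rw [div_le_iff₀ (sub_pos.2 hab)]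
  simpa [mul_comm] using intervalIntegral.integral_mono_ae_restrict hab.le (hint ha hb)
    intervalIntegrable_const (ae_restrict_of_ae_restrict_of_subset hsub hgC)

theorem rightDeriv_primitive_mem_Icc {g : ℝ → ℝ} {C : ℝ} (hg : IntegrableOn g (Icc 0 1))
    (hg0 : 0 ≤ᵐ[volume.restrict (Icc 0 1)] g) (hgC : ∀ᵐ x ∂volume.restrict (Icc 0 1), g x ≤ C)
    (hconc : ConcaveOn ℝ (Icc 0 1) fun t => ∫ x in 0..t, g x) {x : ℝ} (hx : x ∈ Ioo (0:ℝ) 1) :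
    derivWithin (fun t => ∫ x in 0..t, g x) (Ioi x) x ∈ Icc 0 C := by
  have hx' : x ∈ interior (Icc (0:ℝ) 1) := by rwa [interior_Icc]
  exact ⟨(slope_primitive_mem_Icc hg hg0 hgC (Ioo_subset_Icc_self hx)
      (right_mem_Icc.2 zero_le_one) hx.2).1.trans
      (hconc.slope_le_rightDeriv (Ioo_subset_Icc_self hx) (right_mem_Icc.2 zero_le_one) hx.2
        (hconc.differentiableWithinAt_Ioi_of_mem_interior hx')),
    (hconc.rightDeriv_le_slope_of_mem_interior (left_mem_Icc.2 zero_le_one) hx' hx.1).trans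
      (slope_primitive_mem_Icc hg hg0 hgC (left_mem_Icc.2 zero_le_one)
        (Ioo_subset_Icc_self hx) hx.1).2⟩

theorem ae_rightDeriv_primitive_eq {g : ℝ → ℝ} (hg : IntegrableOn g (Icc 0 1)) :
    ∀ᵐ x ∂volume.restrict (Icc 0 1), derivWithin (fun t => ∫ x in 0..t, g x) (Ioi x) x = g x := by
  have hLeb :=
    ((intervalIntegrable_iff_integrableOn_Icc_of_le zero_le_one).2 hg).ae_hasDerivAt_integral
  filter_upwards [ae_restrict_of_ae hLeb, ae_restrict_mem measurableSet_Icc] with x hx hxI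
  rw [← uIcc_of_le zero_le_one] at hxI
  exact (hx hxI 0 left_mem_uIcc).hasDerivWithinAt.derivWithin (uniqueDiffWithinAt_Ioi x)

theorem exists_antitoneOn_Icc_eqOn_Ioo {r : ℝ → ℝ} {a b C : ℝ} (hC : 0 ≤ C)
    (hr : AntitoneOn r (Ioo a b)) (hrC : ∀ x ∈ Ioo a b, r x ∈ Icc 0 C) :
    ∃ h : ℝ → ℝ, AntitoneOn h (Icc a b) ∧ (∀ x ∈ Icc a b, 0 ≤ h x) ∧ EqOn h r (Ioo a b) := by
  set h : ℝ → ℝ := fun x => if x ∈ Ioo a b then r x else if x ≤ a then C else 0 with h_def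
  have h_mem : EqOn h r (Ioo a b) := fun x hx => if_pos hx
  have h_cases : ∀ x ∈ Icc a b, x ∈ Ioo a b ∨ x = a ∨ (x = b ∧ h x = 0) := by
    intro x hx
    rcases hx.1.eq_or_lt with hax | hax
    · exact Or.inr (Or.inl hax.symm)
    rcases hx.2.eq_or_lt with hxb | hxb
    · exact Or.inr (Or.inr ⟨hxb, by subst hxb; simp [h_def, not_le.2 hax]⟩)
    exact Or.inl ⟨hax, hxb⟩
  have h_a : h a = C := by simp [h_def]
  have hh : ∀ x ∈ Icc a b, h x ∈ Icc 0 C := by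
    intro x hx
    rcases h_cases x hx with hx | rfl | ⟨-, hx0⟩
    · exact h_mem hx ▸ hrC x hx
    · rw [h_a]; exact ⟨hC, le_rfl⟩
    · rw [hx0]; exact ⟨le_rfl, hC⟩
  refine ⟨h, fun x hx y hy hxy => ?_, fun x hx => (hh x hx).1, h_mem⟩
  rcases h_cases x hx with hx' | rfl | ⟨rfl, -⟩
  · rcases h_cases y hy with hy' | rfl | ⟨-, hy0⟩
    · rw [h_mem hx', h_mem hy']
      exact hr hx' hy' hxy
    · exact absurd hxy (not_le.2 hx'.1)
    · exact hy0 ▸ (hh x hx).1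
  · exact h_a ▸ (hh y hy).2
  · rw [le_antisymm hy.2 hxy]

theorem exists_antitoneOn_ae_eq_of_concaveOn_primitive {g : ℝ → ℝ} {C : ℝ}
    (hg : IntegrableOn g (Icc 0 1)) (hg0 : 0 ≤ᵐ[volume.restrict (Icc 0 1)] g)
    (hgC : ∀ᵐ x ∂volume.restrict (Icc 0 1), g x ≤ C)
    (hconc : ConcaveOn ℝ (Icc 0 1) fun t => ∫ x in 0..t, g x) :
    ∃ h : ℝ → ℝ, AntitoneOn h (Icc 0 1) ∧ (∀ x ∈ Icc 0 1, 0 ≤ h x) ∧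
      h =ᵐ[volume.restrict (Icc 0 1)] g := by
  have hr := fun x (hx : x ∈ Ioo (0:ℝ) 1) => rightDeriv_primitive_mem_Icc hg hg0 hgC hconc hx
  obtain ⟨h, hanti, h0, heq⟩ := exists_antitoneOn_Icc_eqOn_Ioo
    ((hr (1 / 2) ⟨by norm_num, by norm_num⟩).1.trans (hr _ ⟨by norm_num, by norm_num⟩).2)
    (interior_Icc (a := (0:ℝ)) (b := 1) ▸ hconc.antitoneOn_rightDeriv) hr
  refine ⟨h, hanti, h0, ?_⟩
  have hIoo : ∀ᵐ x ∂volume.restrict (Icc (0:ℝ) 1), x ∈ Ioo 0 1 := by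
    rw [← Measure.restrict_congr_set Ioo_ae_eq_Icc]
    exact ae_restrict_mem measurableSet_Ioo
  filter_upwards [ae_rightDeriv_primitive_eq hg, hIoo] with x hx hxI
  rw [heq hxI]
  exact hx

theorem eventually_le_div_add_of_le_mul_add {b : ℕ → ℝ} {α D ε : ℝ} (hα0 : 0 ≤ α)
    (hα1 : α < 1) (hε : 0 < ε) (hb : ∀ᶠ n in atTop, b (n + 1) ≤ α * b n + D) :
    ∀ᶠ n in atTop, b n ≤ D / (1 - α) + ε := by
  obtain ⟨n₀, hn₀⟩ := eventually_atTop.1 hb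
  have hc : α * (D / (1 - α)) + D = D / (1 - α) := by
    field_simp [(sub_pos.2 hα1).ne']
    ring
  set c := D / (1 - α)
  have hdecay : ∀ k, b (n₀ + k) - c ≤ α ^ k * (b n₀ - c) := by
    intro k
    induction k with
    | zero => simp
    | succ k ih =>
      calc b (n₀ + (k + 1)) - c ≤ α * (b (n₀ + k) - c) := by
            have := hn₀ (n₀ + k) (Nat.le_add_right _ _); rw [← add_assoc]; linarith
        _ ≤ α * (α ^ k * (b n₀ - c)) := mul_le_mul_of_nonneg_left ih hα0
        _ = α ^ (k + 1) * (b n₀ - c) := by ring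
  have hsmall : ∀ᶠ k in atTop, α ^ k * (b n₀ - c) < ε := by
    have := (tendsto_pow_atTop_nhds_zero_of_lt_one hα0 hα1).mul_const (b n₀ - c)
    rw [zero_mul] at this
    exact this.eventually (gt_mem_nhds hε)
  obtain ⟨k₀, hk₀⟩ := eventually_atTop.1 hsmall
  filter_upwards [eventually_ge_atTop (n₀ + k₀)] with n hn
  obtain ⟨k, rfl⟩ := Nat.exists_eq_add_of_le (le_of_add_le_left hn)
  linarith [hdecay k, hk₀ k (by omega)]

theorem half_le_of_antitoneOn {h : ℝ → ℝ} {K : ℝ} (hK : 1 < 2 * K)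
    (hanti : AntitoneOn h (Icc 0 1)) (hint : IntegrableOn h (Icc 0 1))
    (h1 : ∫ x in Icc 0 1, h x = 1) (hle : ∀ᵐ x ∂volume.restrict (Icc 0 1), h x ≤ K) :
    ∀ x ∈ Icc 0 (1 / (2 * K)), 1 / 2 ≤ h x := by
  intro x hx
  have hx1 : x < 1 := hx.2.trans_lt ((div_lt_one (by linarith)).2 hK)
  have hxI : x ∈ Icc (0:ℝ) 1 := ⟨hx.1, hx1.le⟩
  have hKx : K * x ≤ 1 / 2 := by
    have := mul_le_mul_of_nonneg_left hx.2 (by linarith : (0:ℝ) ≤ K)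
    rwa [show K * (1 / (2 * K)) = 1 / 2 by field_simp [(by linarith : K ≠ 0)]] at this
  have h0I : (0:ℝ) ∈ Icc 0 1 := left_mem_Icc.2 zero_le_one
  have h1I : (1:ℝ) ∈ Icc 0 1 := right_mem_Icc.2 zero_le_one
  have hint' : ∀ {a b : ℝ}, a ∈ Icc (0:ℝ) 1 → b ∈ Icc (0:ℝ) 1 →
      IntervalIntegrable h volume a b :=
    fun ha hb => (hint.mono_set (uIcc_subset_Icc ha hb)).intervalIntegrable
  have hleft : ∫ t in 0..x, h t ≤ x * K := by
    simpa using intervalIntegral.integral_mono_ae_restrict hx.1 (hint' h0I hxI)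
      intervalIntegrable_const
      (ae_restrict_of_ae_restrict_of_subset (Icc_subset_Icc_right hx1.le) hle)
  have hright : ∫ t in x..1, h t ≤ (1 - x) * h x := by
    simpa using intervalIntegral.integral_mono_on hx1.le (hint' hxI h1I)
      intervalIntegrable_const fun t ht => hanti hxI ⟨hx.1.trans ht.1, ht.2⟩ ht.1
  have htotal : (∫ t in 0..x, h t) + ∫ t in x..1, h t = 1 := by
    rw [intervalIntegral.integral_add_adjacent_intervals (hint' h0I hxI) (hint' hxI h1I),
      intervalIntegral.integral_of_le zero_le_one, integral_Icc_eq_integral_Ioc.symm, h1]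
  have key : 1 / 2 ≤ (1 - x) * h x := by linarith
  nlinarith [mul_nonneg hx.1 (sub_nonneg.2 key)]

theorem ae_le_of_eLpNorm_top_le {α : Type*} [MeasurableSpace α] {μ : Measure α} {f : α → ℝ}
    {C : ℝ} (hC : 0 ≤ C) (h : eLpNorm f ⊤ μ ≤ ENNReal.ofReal C) : ∀ᵐ x ∂μ, f x ≤ C := by
  rw [eLpNorm_exponent_top] at h
  filter_upwards [ae_le_eLpNormEssSup (f := f) (μ := μ)] with x hx
  have hx' : ‖f x‖ₑ ≤ ENNReal.ofReal C := hx.trans h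
  rw [Real.enorm_eq_ofReal_abs, ENNReal.ofReal_le_ofReal_iff hC] at hx'
  exact (le_abs_self _).trans hx'

theorem eLpNorm_top_lt_top_of_antitoneOn {h : ℝ → ℝ} {a b : ℝ} (hint : IntegrableOn h (Icc a b))
    (hanti : AntitoneOn h (Icc a b)) (h0 : ∀ x ∈ Icc a b, 0 ≤ h x) :
    eLpNorm h ⊤ (volume.restrict (Icc a b)) < ⊤ := by
  refine (memLp_top_of_bound hint.aestronglyMeasurable (h a) ?_).eLpNorm_lt_top
  filter_upwards [ae_restrict_mem measurableSet_Icc] with x hx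
  rw [Real.norm_of_nonneg (h0 x hx)]
  exact hanti (left_mem_Icc.2 (hx.1.trans hx.2)) hx hx.1

theorem eLpNorm_one_restrict_eq_ofReal_integral {α : Type*} [MeasurableSpace α] {μ : Measure α}
    {s : Set α} {h : α → ℝ} (hs : MeasurableSet s) (hint : IntegrableOn h s μ)
    (h0 : ∀ x ∈ s, 0 ≤ h x) :
    eLpNorm h 1 (μ.restrict s) = ENNReal.ofReal (∫ x in s, h x ∂μ) := by
  rw [eLpNorm_one_eq_lintegral_enorm, ← ofReal_integral_norm_eq_lintegral_enorm hint]
  congr 1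
  exact setIntegral_congr_fun hs fun x hx => Real.norm_of_nonneg (h0 x hx)

def ConcaveOffKinks (J : Set ℝ) (F : ℝ → ℝ) : Prop :=
  ∀ u v, 0 ≤ u → v ≤ 1 → Disjoint J (Ioo u v) → ConcaveOn ℝ (Icc u v) F

theorem ConcaveOffKinks.mono {J J' : Set ℝ} {F : ℝ → ℝ} (hF : ConcaveOffKinks J F)
    (h : J ⊆ J') : ConcaveOffKinks J' F :=
  fun u v hu hv hd => hF u v hu hv (hd.mono_left h)

section StepFunction

variable {ι : Type*} [Fintype ι] {c p q : ι → ℝ}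

theorem integrable_sum_mul_indicator_Icc (c p q : ι → ℝ) :
    Integrable fun x => ∑ j, c j * (Icc (p j) (q j)).indicator (fun _ => (1:ℝ)) x :=
  integrable_finsetSum _ fun j _ =>
    ((integrableOn_const (by simp)).integrable_indicator measurableSet_Icc).const_mul (c j)

theorem sum_mul_indicator_Icc_mem_Icc (hc : ∀ j, 0 ≤ c j) (x : ℝ) :
    ∑ j, c j * (Icc (p j) (q j)).indicator (fun _ => (1:ℝ)) x ∈ Icc 0 (∑ j, c j) := by
  have hind : ∀ j, (Icc (p j) (q j)).indicator (fun _ => (1:ℝ)) x ∈ Icc 0 1 := fun j =>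
    ⟨indicator_nonneg (fun _ _ => zero_le_one) x, indicator_le_self' (fun _ _ => zero_le_one) x⟩
  exact ⟨Finset.sum_nonneg fun j _ => mul_nonneg (hc j) (hind j).1,
    Finset.sum_le_sum fun j _ => mul_le_of_le_one_right (hc j) (hind j).2⟩

theorem antitoneOn_sum_mul_indicator_Icc (hc : ∀ j, 0 ≤ c j) {u v : ℝ}
    (hp : ∀ j, p j ∉ Ioo u v) :
    AntitoneOn (fun x => ∑ j, c j * (Icc (p j) (q j)).indicator (fun _ => (1:ℝ)) x) (Ioo u v) := by
  intro x hx y hy hxy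
  refine Finset.sum_le_sum fun j _ => mul_le_mul_of_nonneg_left ?_ (hc j)
  by_cases hyj : y ∈ Icc (p j) (q j)
  · have hxj : x ∈ Icc (p j) (q j) :=
      ⟨not_lt.1 fun hpx => hp j ⟨hx.1.trans hpx, hyj.1.trans_lt hy.2⟩, hxy.trans hyj.2⟩
    rw [indicator_of_mem hyj, indicator_of_mem hxj]
  · rw [indicator_of_notMem hyj]
    exact indicator_nonneg (fun _ _ => zero_le_one) x

theorem concaveOffKinks_primitive_sum_mul_indicator_Icc (hc : ∀ j, 0 ≤ c j) :
    ConcaveOffKinks (range p)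
      fun t => ∫ x in 0..t, ∑ j, c j * (Icc (p j) (q j)).indicator (fun _ => (1:ℝ)) x :=
  fun _ _ _ _ hd => concaveOn_primitive_of_antitoneOn
    (integrable_sum_mul_indicator_Icc c p q).locallyIntegrable
    (antitoneOn_sum_mul_indicator_Icc hc fun j => disjoint_left.1 hd (mem_range_self j)) 0

end StepFunction

namespace PCT

variable (T : PCT)

theorem a_nonneg (i : ℕ) : 0 ≤ T.a i := by
  by_contra h
  obtain ⟨x, hx⟩ := nonempty_Ioo.2 (lt_min (T.lt i) (not_le.1 h))
  exact absurd (T.sub i ⟨hx.1, hx.2.trans_le (min_le_left _ _)⟩).1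
    (not_le.2 (hx.2.trans_le (min_le_right _ _)))

theorem b_le_one (i : ℕ) : T.b i ≤ 1 := by
  by_contra h
  obtain ⟨x, hx⟩ := nonempty_Ioo.2 (max_lt (T.lt i) (not_le.1 h))
  exact absurd (T.sub i ⟨(le_max_left _ _).trans_lt hx.1, hx.2⟩).2
    (not_le.2 ((le_max_right _ _).trans_lt hx.1))

theorem endpoint_notMem_branch {x : ℝ} (hx : x ∈ range T.a ∪ range T.b) (j : ℕ) :
    x ∉ Ioo (T.a j) (T.b j) := by
  intro hj
  obtain ⟨i, hi⟩ : ∃ i, x = T.a i ∨ x = T.b i := by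
    rcases hx with ⟨i, rfl⟩ | ⟨i, rfl⟩ <;> exact ⟨i, by simp⟩
  obtain rfl | hij := eq_or_ne i j
  · rcases hi with rfl | rfl <;> simp at hj
  · have hdisj := Set.Ioo_disjoint_Ioo.1 (T.disj hij)
    have := T.lt i
    rw [min_le_iff, le_max_iff, le_max_iff] at hdisj
    rcases hi with rfl | rfl <;> rcases hdisj with (h | h) | (h | h) <;> linarith [hj.1, hj.2]

theorem tau_pos {i : ℕ} {x : ℝ} (hx : x ∈ Ioo (T.a i) (T.b i)) : 0 < T.τ x := by
  obtain ⟨y, hy⟩ := nonempty_Ioo.2 hx.1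
  exact (T.maps_to (T.sub i ⟨hy.1, hy.2.trans hx.2⟩)).1.trans_lt
    (T.mono i ⟨hy.1, hy.2.trans hx.2⟩ hx hy.2)

theorem da_le_deriv {i : ℕ} {x : ℝ} (hx : x ∈ Ioo (T.a i) (T.b i)) : T.da i ≤ deriv T.τ x := by
  refine le_of_tendsto (T.deriv_lim i) ?_
  filter_upwards [Ioo_mem_nhdsGT hx.1] with y hy
  exact (T.conv i).monotoneOn_deriv (fun z hz => T.diff i z hz) ⟨hy.1, hy.2.trans hx.2⟩ hx hy.2.le

theorem measurableSet_preimage_inter_branch {A : Set ℝ} (hA : MeasurableSet A) (i : ℕ) :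
    MeasurableSet (T.τ ⁻¹' A ∩ Ioo (T.a i) (T.b i)) := by
  classical
  have hm : Measurable ((Ioo (T.a i) (T.b i)).piecewise T.τ 0) :=
    ContinuousOn.measurable_piecewise (fun x hx => (T.diff i x hx).continuousAt.continuousWithinAt)
      continuousOn_const measurableSet_Ioo
  rw [inter_comm, ← (piecewise_eqOn _ T.τ 0).inter_preimage_eq]
  exact measurableSet_Ioo.inter (hm hA)

-- The inverse of the branch `τ_i`, extended by `a i` below its range and by `b i` above it.
noncomputable def invBranch (i : ℕ) (t : ℝ) : ℝ :=
  sSup (insert (T.a i) (T.τ ⁻¹' Iic t ∩ Ioo (T.a i) (T.b i)))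

variable {i : ℕ} {t : ℝ}

theorem bddAbove_invBranch (i : ℕ) (t : ℝ) :
    BddAbove (insert (T.a i) (T.τ ⁻¹' Iic t ∩ Ioo (T.a i) (T.b i))) :=
  ⟨T.b i, by rintro x (rfl | hx); exacts [(T.lt i).le, hx.2.2.le]⟩

theorem a_le_invBranch (i : ℕ) (t : ℝ) : T.a i ≤ T.invBranch i t :=
  le_csSup (T.bddAbove_invBranch i t) (mem_insert _ _)

theorem invBranch_le_b (i : ℕ) (t : ℝ) : T.invBranch i t ≤ T.b i :=
  csSup_le (insert_nonempty _ _) (by rintro x (rfl | hx); exacts [(T.lt i).le, hx.2.2.le])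

theorem le_invBranch {x : ℝ} (hx : x ∈ Ioo (T.a i) (T.b i)) (hxt : T.τ x ≤ t) :
    x ≤ T.invBranch i t :=
  le_csSup (T.bddAbove_invBranch i t) (mem_insert_of_mem _ ⟨hxt, hx⟩)

theorem mem_branch_and_tau_lt_of_mem_Ioo_invBranch {y : ℝ}
    (hy : y ∈ Ioo (T.a i) (T.invBranch i t)) : y ∈ Ioo (T.a i) (T.b i) ∧ T.τ y < t := by
  obtain ⟨z, hz, hyz⟩ := exists_lt_of_lt_csSup (insert_nonempty _ _) hy.2
  rcases hz with rfl | ⟨hzt, hz⟩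
  · exact absurd hy.1 (not_lt.2 hyz.le)
  · have hy' : y ∈ Ioo (T.a i) (T.b i) := ⟨hy.1, hyz.trans hz.2⟩
    exact ⟨hy', (T.mono i hy' hz hyz).trans_le hzt⟩

theorem monotone_invBranch (i : ℕ) : Monotone (T.invBranch i) := fun _ _ hst =>
  csSup_le_csSup (T.bddAbove_invBranch i _) (insert_nonempty _ _)
    (insert_subset_insert (inter_subset_inter_left _ (preimage_mono (Iic_subset_Iic.2 hst))))

theorem preimage_Iic_inter_branch_ae_eq (i : ℕ) (t : ℝ) :
    (T.τ ⁻¹' Iic t ∩ Ioo (T.a i) (T.b i) : Set ℝ) =ᵐ[volume] Ioc (T.a i) (T.invBranch i t) := by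
  have h₁ : T.τ ⁻¹' Iic t ∩ Ioo (T.a i) (T.b i) ⊆ Ioc (T.a i) (T.invBranch i t) :=
    fun x hx => ⟨hx.2.1, T.le_invBranch hx.2 hx.1⟩
  have h₂ : Ioo (T.a i) (T.invBranch i t) ⊆ T.τ ⁻¹' Iic t ∩ Ioo (T.a i) (T.b i) := fun y hy =>
    ⟨(T.mem_branch_and_tau_lt_of_mem_Ioo_invBranch hy).2.le,
      (T.mem_branch_and_tau_lt_of_mem_Ioo_invBranch hy).1⟩
  exact (LE.le.eventuallyLE h₁).antisymm (Ioo_ae_eq_Ioc.symm.le.trans (LE.le.eventuallyLE h₂))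

theorem le_invBranch_of_forall_pos {c : ℝ} (hc : ∀ δ > 0, c ≤ T.invBranch i (t + δ)) :
    c ≤ T.invBranch i t := by
  by_contra hlt
  obtain ⟨y, hy⟩ := nonempty_Ioo.2 (max_lt ((T.a_le_invBranch i t).trans_lt (not_le.1 hlt))
    (not_le.1 hlt))
  have hay : T.a i < y := (le_max_left _ _).trans_lt hy.1
  have hmem : ∀ δ > 0, y ∈ Ioo (T.a i) (T.b i) ∧ T.τ y < t + δ := fun δ hδ =>
    T.mem_branch_and_tau_lt_of_mem_Ioo_invBranch ⟨hay, hy.2.trans_le (hc δ hδ)⟩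
  have hyt : T.τ y ≤ t := le_of_forall_pos_lt_add fun δ hδ => (hmem δ hδ).2
  exact ((le_max_right _ _).trans_lt hy.1).not_ge (T.le_invBranch (hmem 1 one_pos).1 hyt)

theorem exists_near_invBranch (i : ℕ) (ht : 0 ≤ t) {δ ε : ℝ} (hδ : 0 < δ) (hε : 0 < ε) :
    ∃ x ∈ Ioo (T.a i) (T.b i), T.invBranch i t - ε < x ∧ T.τ x ≤ t + δ := by
  obtain ⟨z, hz, hlt⟩ := exists_lt_of_lt_csSup (insert_nonempty _ _)
    (sub_lt_self (T.invBranch i t) hε)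
  rcases hz with rfl | ⟨hzt, hz⟩
  · -- `τ_i` tends to `0` at `a i`, so points just right of `a i` qualify
    have hsmall : ∀ᶠ x in 𝓝[>] T.a i, T.τ x < δ := (T.lim_zero i).eventually_lt_const hδ
    obtain ⟨x, hxδ, hx⟩ := (hsmall.and (Ioo_mem_nhdsGT (T.lt i))).exists
    exact ⟨x, hx, hlt.trans hx.1, by linarith⟩
  · exact ⟨z, hz, hlt, by linarith [show T.τ z ≤ t from hzt]⟩

theorem concaveOn_invBranch (i : ℕ) : ConcaveOn ℝ (Ici 0) (T.invBranch i) := by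
  refine ⟨convex_Ici 0, fun t₁ ht₁ t₂ ht₂ p q hp hq hpq => ?_⟩
  simp only [smul_eq_mul]
  -- The suprema need not be attained, so the convexity of `τ_i` is applied to near-maximizers
  -- of slightly raised levels.
  refine T.le_invBranch_of_forall_pos fun δ hδ => le_of_forall_pos_le_add fun ε hε => ?_
  obtain ⟨x₁, hx₁, hσx₁, hτx₁⟩ := T.exists_near_invBranch i ht₁ hδ hε
  obtain ⟨x₂, hx₂, hσx₂, hτx₂⟩ := T.exists_near_invBranch i ht₂ hδ hε
  have hx : p * x₁ + q * x₂ ∈ Ioo (T.a i) (T.b i) := by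
    simpa using convex_Ioo (T.a i) (T.b i) hx₁ hx₂ hp hq hpq
  have hτx : T.τ (p * x₁ + q * x₂) ≤ p * t₁ + q * t₂ + δ := by
    have := (T.conv i).2 hx₁ hx₂ hp hq hpq
    simp only [smul_eq_mul] at this
    nlinarith
  calc p * T.invBranch i t₁ + q * T.invBranch i t₂ ≤ p * x₁ + q * x₂ + ε := by nlinarith
    _ ≤ T.invBranch i (p * t₁ + q * t₂ + δ) + ε := by gcongr; exact T.le_invBranch hx hτx

theorem ofReal_da_mul_volume_preimage_inter_branch_le {A : Set ℝ} (hA : MeasurableSet A)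
    (i : ℕ) : ENNReal.ofReal (T.da i) * volume (T.τ ⁻¹' A ∩ Ioo (T.a i) (T.b i)) ≤ volume A := by
  set B := T.τ ⁻¹' A ∩ Ioo (T.a i) (T.b i)
  have hB : B ⊆ Ioo (T.a i) (T.b i) := inter_subset_right
  have himage := lintegral_image_eq_lintegral_abs_deriv_mul
    (T.measurableSet_preimage_inter_branch hA i)
    (fun x hx => (T.diff i x (hB hx)).hasDerivAt.hasDerivWithinAt) ((T.mono i).injOn.mono hB) 1
  simp only [Pi.one_apply, mul_one, lintegral_one, Measure.restrict_apply_univ] at himage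
  calc ENNReal.ofReal (T.da i) * volume B = ∫⁻ _ in B, ENNReal.ofReal (T.da i) :=
        (setLIntegral_const B _).symm
    _ ≤ ∫⁻ x in B, ENNReal.ofReal |deriv T.τ x| := by
        refine setLIntegral_mono' (T.measurableSet_preimage_inter_branch hA i) fun x hx => ?_
        exact ENNReal.ofReal_le_ofReal ((T.da_le_deriv (hB hx)).trans (le_abs_self _))
    _ = volume (T.τ '' B) := himage.symm
    _ ≤ volume A := measure_mono (image_subset_iff.2 inter_subset_left)

theorem preimage_inter_Icc_ae_eq_iUnion (A : Set ℝ) :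
    (T.τ ⁻¹' A ∩ Icc 0 1 : Set ℝ) =ᵐ[volume] ⋃ i, T.τ ⁻¹' A ∩ Ioo (T.a i) (T.b i) := by
  refine EventuallyLE.antisymm ?_ (LE.le.eventuallyLE
    (iUnion_subset fun i => inter_subset_inter_right _ (T.sub i)))
  filter_upwards [measure_eq_zero_iff_ae_notMem.1 T.null] with x hx hxA
  obtain ⟨i, hi⟩ := mem_iUnion.1 (not_not.1 fun h => hx ⟨hxA.2, h⟩)
  exact mem_iUnion.2 ⟨i, hxA.1, hi⟩

theorem hasSum_setIntegral_preimage {g : ℝ → ℝ} (hg : IntegrableOn g (Icc 0 1)) {A : Set ℝ}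
    (hA : MeasurableSet A) :
    HasSum (fun i => ∫ x in T.τ ⁻¹' A ∩ Ioo (T.a i) (T.b i), g x)
      (∫ x in T.τ ⁻¹' A ∩ Icc 0 1, g x) := by
  rw [setIntegral_congr_set (T.preimage_inter_Icc_ae_eq_iUnion A)]
  exact hasSum_integral_iUnion (T.measurableSet_preimage_inter_branch hA)
    (T.disj.mono fun i j h => h.mono inter_subset_right inter_subset_right)
    (hg.mono_set (iUnion_subset fun i => inter_subset_right.trans (T.sub i)))

theorem setIntegral_preimage_le {g : ℝ → ℝ} {C : ℝ} (hg : IntegrableOn g (Icc 0 1))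
    (hC : 0 ≤ C) (hgC : ∀ᵐ x ∂volume.restrict (Icc 0 1), g x ≤ C) {A : Set ℝ}
    (hA : MeasurableSet A) (hAI : A ⊆ Icc 0 1) :
    ∫ x in T.τ ⁻¹' A ∩ Icc 0 1, g x ≤ C * volume.real A * ∑' i, 1 / T.da i := by
  refine hasSum_le (fun i => ?_) (T.hasSum_setIntegral_preimage hg hA)
    (T.sum_inv.hasSum.mul_left (C * volume.real A))
  set B := T.τ ⁻¹' A ∩ Ioo (T.a i) (T.b i)
  have hBI : B ⊆ Icc 0 1 := inter_subset_right.trans (T.sub i)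
  have hfin : volume (Icc (0:ℝ) 1) ≠ ⊤ := by simp
  have hB : T.da i * volume.real B ≤ volume.real A := by
    have := ENNReal.toReal_mono (measure_ne_top_of_subset hAI hfin)
      (T.ofReal_da_mul_volume_preimage_inter_branch_le hA i)
    rwa [ENNReal.toReal_mul, ENNReal.toReal_ofReal (T.da_pos i).le] at this
  calc ∫ x in B, g x ≤ ∫ _ in B, C := setIntegral_mono_ae_restrict (hg.mono_set hBI)
        (integrableOn_const (measure_ne_top_of_subset hBI hfin))
        (ae_restrict_of_ae_restrict_of_subset hBI hgC)
    _ = C * volume.real B := by rw [setIntegral_const, smul_eq_mul, mul_comm]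
    _ ≤ C * volume.real A * (1 / T.da i) := by
        rw [mul_assoc, mul_one_div]
        exact mul_le_mul_of_nonneg_left ((le_div_iff₀ (T.da_pos i)).2 (by linarith)) hC

theorem disjoint_Ioo_invBranch {J : Set ℝ} {u v : ℝ}
    (h : Disjoint (T.τ '' (J ∩ ⋃ i, Ioo (T.a i) (T.b i))) (Ioo u v)) (i : ℕ) :
    Disjoint J (Ioo (T.invBranch i u) (T.invBranch i v)) := by
  refine disjoint_left.2 fun x hxJ hx => ?_
  obtain ⟨hxi, hxv⟩ := T.mem_branch_and_tau_lt_of_mem_Ioo_invBranch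
    ⟨(T.a_le_invBranch i u).trans_lt hx.1, hx.2⟩
  have hux : u < T.τ x := not_le.1 fun hxu => hx.1.not_ge (T.le_invBranch hxi hxu)
  exact disjoint_left.1 h ⟨x, ⟨hxJ, mem_iUnion.2 ⟨i, hxi⟩⟩, rfl⟩ ⟨hux, hxv⟩

def kinkSet (J : Set ℝ) (n : ℕ) : Set ℝ :=
  T.τ^[n] '' {p ∈ J | ∀ m < n, T.τ^[m] p ∈ ⋃ i, Ioo (T.a i) (T.b i)}

theorem kinkSet_zero (J : Set ℝ) : T.kinkSet J 0 = J := by simp [kinkSet]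

theorem image_kinkSet_inter_subset (J : Set ℝ) (n : ℕ) :
    T.τ '' (T.kinkSet J n ∩ ⋃ i, Ioo (T.a i) (T.b i)) ⊆ T.kinkSet J (n + 1) := by
  rintro _ ⟨_, ⟨⟨p, ⟨hpJ, hp⟩, rfl⟩, hpn⟩, rfl⟩
  refine ⟨p, ⟨hpJ, fun m hm => ?_⟩, Function.iterate_succ_apply' _ _ _⟩
  rcases Nat.lt_succ_iff_lt_or_eq.1 hm with hm | rfl
  exacts [hp m hm, hpn]

theorem eventually_kinkSet_eq_empty {J : Set ℝ} (hJ : J.Finite)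
    (hJS : ∀ p ∈ J, ∃ d, T.τ^[d] p ∈ range T.a ∪ range T.b) :
    ∀ᶠ n in atTop, T.kinkSet J n = ∅ := by
  have hleaves : ∀ p ∈ J, ∀ᶠ n in atTop, ¬ ∀ m < n, T.τ^[m] p ∈ ⋃ i, Ioo (T.a i) (T.b i) :=
    fun p hp => by
      obtain ⟨d, hd⟩ := hJS p hp
      filter_upwards [eventually_gt_atTop d] with n hn h
      obtain ⟨i, hi⟩ := mem_iUnion.1 (h d hn)
      exact T.endpoint_notMem_branch hd i hi
  filter_upwards [(eventually_all_finite hJ).2 hleaves] with n hn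
  exact image_eq_empty.2 (eq_empty_of_forall_notMem fun p hp => hn p hp.1 hp.2)

def IsFrobeniusPerron (P : (ℝ → ℝ) → ℝ → ℝ) : Prop :=
  ∀ f : ℝ → ℝ, IntegrableOn f (Icc 0 1) →
    IntegrableOn (P f) (Icc 0 1) ∧ ∀ A : Set ℝ, MeasurableSet A → A ⊆ Icc 0 1 →
      ∫ x in A, P f x = ∫ x in T.τ ⁻¹' A ∩ Icc 0 1, f x

end PCT

def HasLasotaYorkeBound (P : (ℝ → ℝ) → ℝ → ℝ) (α D : ℝ) : Prop :=
  ∀ f : ℝ → ℝ, (∀ x ∈ Icc (0:ℝ) 1, 0 ≤ f x) → AntitoneOn f (Icc 0 1) →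
    IntegrableOn f (Icc 0 1) → eLpNorm f ⊤ (volume.restrict (Icc 0 1)) < ⊤ →
    eLpNorm (P f) ⊤ (volume.restrict (Icc 0 1)) ≤
      ENNReal.ofReal α * eLpNorm f ⊤ (volume.restrict (Icc 0 1)) +
      ENNReal.ofReal D * eLpNorm f 1 (volume.restrict (Icc 0 1))

namespace PCT.IsFrobeniusPerron

variable {T : PCT} {P : (ℝ → ℝ) → ℝ → ℝ} {g : ℝ → ℝ}

theorem integrableOn (hP : T.IsFrobeniusPerron P) (hg : IntegrableOn g (Icc 0 1)) :
    IntegrableOn (P g) (Icc 0 1) :=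
  (hP g hg).1

theorem setIntegral_restrict_eq (hP : T.IsFrobeniusPerron P) (hg : IntegrableOn g (Icc 0 1))
    {s : Set ℝ} (hs : MeasurableSet s) :
    ∫ x in s, P g x ∂volume.restrict (Icc 0 1) = ∫ x in T.τ ⁻¹' (s ∩ Icc 0 1) ∩ Icc 0 1, g x := by
  rw [Measure.restrict_restrict hs]
  exact (hP g hg).2 _ (hs.inter measurableSet_Icc) inter_subset_right

theorem ae_nonneg (hP : T.IsFrobeniusPerron P) (hg : IntegrableOn g (Icc 0 1))
    (hg0 : 0 ≤ᵐ[volume.restrict (Icc 0 1)] g) : 0 ≤ᵐ[volume.restrict (Icc 0 1)] P g :=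
  ae_nonneg_of_forall_setIntegral_nonneg (hP.integrableOn hg) fun s hs _ => by
    rw [hP.setIntegral_restrict_eq hg hs]
    exact setIntegral_nonneg_of_ae_restrict
      (ae_restrict_of_ae_restrict_of_subset inter_subset_right hg0)

theorem congr_ae (hP : T.IsFrobeniusPerron P) {g₁ g₂ : ℝ → ℝ} (hg₁ : IntegrableOn g₁ (Icc 0 1))
    (hg₂ : IntegrableOn g₂ (Icc 0 1)) (h : g₁ =ᵐ[volume.restrict (Icc 0 1)] g₂) :
    P g₁ =ᵐ[volume.restrict (Icc 0 1)] P g₂ :=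
  ae_eq_of_forall_setIntegral_eq_of_sigmaFinite (fun _ _ _ => (hP.integrableOn hg₁).integrableOn)
    (fun _ _ _ => (hP.integrableOn hg₂).integrableOn) fun s hs _ => by
      rw [hP.setIntegral_restrict_eq hg₁ hs, hP.setIntegral_restrict_eq hg₂ hs]
      exact integral_congr_ae (ae_restrict_of_ae_restrict_of_subset inter_subset_right h)

theorem integral_eq (hP : T.IsFrobeniusPerron P) (hg : IntegrableOn g (Icc 0 1)) :
    ∫ x in Icc 0 1, P g x = ∫ x in Icc 0 1, g x := by
  rw [(hP g hg).2 _ measurableSet_Icc subset_rfl, inter_eq_right.2 T.maps_to.subset_preimage]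

theorem ae_le_mul_tsum (hP : T.IsFrobeniusPerron P) (hg : IntegrableOn g (Icc 0 1)) {C : ℝ}
    (hC : 0 ≤ C) (hgC : ∀ᵐ x ∂volume.restrict (Icc 0 1), g x ≤ C) :
    ∀ᵐ x ∂volume.restrict (Icc 0 1), P g x ≤ C * ∑' i, 1 / T.da i := by
  have hsub : 0 ≤ᵐ[volume.restrict (Icc 0 1)] fun x => C * ∑' i, 1 / T.da i - P g x := by
    refine ae_nonneg_of_forall_setIntegral_nonneg
      ((integrable_const _).sub (hP.integrableOn hg)) fun s hs _ => ?_
    rw [integral_sub (integrable_const _) (hP.integrableOn hg).integrableOn, setIntegral_const,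
      hP.setIntegral_restrict_eq hg hs, measureReal_restrict_apply hs, smul_eq_mul, sub_nonneg]
    linarith [T.setIntegral_preimage_le hg hC hgC (hs.inter measurableSet_Icc) inter_subset_right]
  filter_upwards [hsub] with x hx
  linarith [show (0 : ℝ) ≤ C * ∑' i, 1 / T.da i - P g x from hx]

theorem integrableOn_iterate (hP : T.IsFrobeniusPerron P) (hg : IntegrableOn g (Icc 0 1))
    (n : ℕ) : IntegrableOn (P^[n] g) (Icc 0 1) := by
  induction n with
  | zero => exact hg
  | succ n ih => rw [Function.iterate_succ_apply']; exact hP.integrableOn ih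

theorem ae_nonneg_iterate (hP : T.IsFrobeniusPerron P) (hg : IntegrableOn g (Icc 0 1))
    (hg0 : 0 ≤ᵐ[volume.restrict (Icc 0 1)] g) (n : ℕ) :
    0 ≤ᵐ[volume.restrict (Icc 0 1)] P^[n] g := by
  induction n with
  | zero => exact hg0
  | succ n ih =>
    rw [Function.iterate_succ_apply']; exact hP.ae_nonneg (hP.integrableOn_iterate hg n) ih

theorem integral_iterate (hP : T.IsFrobeniusPerron P) (hg : IntegrableOn g (Icc 0 1)) (n : ℕ) :
    ∫ x in Icc 0 1, P^[n] g x = ∫ x in Icc 0 1, g x := by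
  induction n with
  | zero => rfl
  | succ n ih =>
    rw [Function.iterate_succ_apply', hP.integral_eq (hP.integrableOn_iterate hg n), ih]

theorem ae_le_iterate (hP : T.IsFrobeniusPerron P) (hg : IntegrableOn g (Icc 0 1)) {C : ℝ}
    (hC : 0 ≤ C) (hgC : ∀ᵐ x ∂volume.restrict (Icc 0 1), g x ≤ C) (n : ℕ) :
    ∀ᵐ x ∂volume.restrict (Icc 0 1), P^[n] g x ≤ C * (∑' i, 1 / T.da i) ^ n := by
  have hc : 0 ≤ ∑' i, 1 / T.da i := tsum_nonneg fun i => one_div_nonneg.2 (T.da_pos i).le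
  induction n with
  | zero => simpa using hgC
  | succ n ih =>
    rw [Function.iterate_succ_apply', pow_succ, ← mul_assoc]
    exact hP.ae_le_mul_tsum (hP.integrableOn_iterate hg n) (by positivity) ih

theorem hasSum_primitive (hP : T.IsFrobeniusPerron P) (hg : IntegrableOn g (Icc 0 1)) {t : ℝ}
    (ht : t ∈ Icc 0 1) :
    HasSum (fun i => ∫ x in T.a i..T.invBranch i t, g x) (∫ x in 0..t, P g x) := by
  rw [intervalIntegral.integral_of_le ht.1,
    (hP g hg).2 _ measurableSet_Ioc (Ioc_subset_Icc_self.trans (Icc_subset_Icc_right ht.2))]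
  convert T.hasSum_setIntegral_preimage hg measurableSet_Ioc using 2 with i
  have hpos : T.τ ⁻¹' Ioc 0 t ∩ Ioo (T.a i) (T.b i) = T.τ ⁻¹' Iic t ∩ Ioo (T.a i) (T.b i) := by
    ext x
    exact ⟨fun h => ⟨h.1.2, h.2⟩, fun h => ⟨⟨T.tau_pos h.2, h.1⟩, h.2⟩⟩
  rw [intervalIntegral.integral_of_le (T.a_le_invBranch i t), hpos,
    setIntegral_congr_set (T.preimage_Iic_inter_branch_ae_eq i t)]

theorem concaveOffKinks_primitive (hP : T.IsFrobeniusPerron P) (hg : IntegrableOn g (Icc 0 1))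
    (hg0 : 0 ≤ᵐ[volume.restrict (Icc 0 1)] g) {J : Set ℝ}
    (hJ : ConcaveOffKinks J fun t => ∫ x in 0..t, g x) :
    ConcaveOffKinks (T.τ '' (J ∩ ⋃ i, Ioo (T.a i) (T.b i))) fun t => ∫ x in 0..t, P g x := by
  intro u v hu hv hdisj
  have hσ : ∀ i t, T.invBranch i t ∈ Icc (0:ℝ) 1 := fun i t =>
    ⟨(T.a_nonneg i).trans (T.a_le_invBranch i t), (T.invBranch_le_b i t).trans (T.b_le_one i)⟩
  refine ConcaveOn.of_hasSum (convex_Icc u v) (fun i => ?_)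
    fun t ht => hP.hasSum_primitive hg ⟨hu.trans ht.1, ht.2.trans hv⟩
  have hcomp := (hJ _ _ (hσ i u).1 (hσ i v).2 (T.disjoint_Ioo_invBranch hdisj i)).comp_of_mapsTo
    ((T.concaveOn_invBranch i).subset (fun t ht => hu.trans ht.1) (convex_Icc u v))
    ((monotoneOn_primitive hg hg0).mono (Icc_subset_Icc (hσ i u).1 (hσ i v).2))
    (T.monotone_invBranch i).mapsTo_Icc
  refine (hcomp.add_const (-∫ x in 0..T.a i, g x)).congr fun t _ => ?_
  have hint : ∀ s ∈ Icc (0:ℝ) 1, IntervalIntegrable g volume 0 s := fun s hs =>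
    (hg.mono_set (uIcc_subset_Icc (left_mem_Icc.2 zero_le_one) hs)).intervalIntegrable
  rw [Pi.add_apply, Function.comp_apply, ← sub_eq_add_neg,
    intervalIntegral.integral_interval_sub_left (hint _ (hσ i t))
      (hint _ ⟨T.a_nonneg i, (T.lt i).le.trans (T.b_le_one i)⟩)]

theorem concaveOffKinks_primitive_iterate (hP : T.IsFrobeniusPerron P)
    (hg : IntegrableOn g (Icc 0 1)) (hg0 : 0 ≤ᵐ[volume.restrict (Icc 0 1)] g) {J : Set ℝ}
    (hJ : ConcaveOffKinks J fun t => ∫ x in 0..t, g x) (n : ℕ) :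
    ConcaveOffKinks (T.kinkSet J n) fun t => ∫ x in 0..t, P^[n] g x := by
  induction n with
  | zero => simpa [T.kinkSet_zero] using hJ
  | succ n ih =>
    simp only [Function.iterate_succ_apply']
    exact (hP.concaveOffKinks_primitive (hP.integrableOn_iterate hg n)
      (hP.ae_nonneg_iterate hg hg0 n) ih).mono (T.image_kinkSet_inter_subset J n)

theorem eventually_concaveOn_primitive_iterate (hP : T.IsFrobeniusPerron P)
    (hg : IntegrableOn g (Icc 0 1)) (hg0 : 0 ≤ᵐ[volume.restrict (Icc 0 1)] g) {J : Set ℝ}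
    (hJ : J.Finite) (hJS : ∀ p ∈ J, ∃ d, T.τ^[d] p ∈ range T.a ∪ range T.b)
    (hconc : ConcaveOffKinks J fun t => ∫ x in 0..t, g x) :
    ∀ᶠ n in atTop, ConcaveOn ℝ (Icc 0 1) fun t => ∫ x in 0..t, P^[n] g x :=
  (T.eventually_kinkSet_eq_empty hJ hJS).mono fun n hn =>
    hP.concaveOffKinks_primitive_iterate hg hg0 hconc n 0 1 le_rfl le_rfl
      (hn ▸ Set.empty_disjoint _)

theorem eventually_exists_antitoneOn_ae_eq_iterate (hP : T.IsFrobeniusPerron P)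
    (hg : IntegrableOn g (Icc 0 1)) (hg0 : 0 ≤ᵐ[volume.restrict (Icc 0 1)] g) {C : ℝ}
    (hC : 0 ≤ C) (hgC : ∀ᵐ x ∂volume.restrict (Icc 0 1), g x ≤ C) {J : Set ℝ} (hJ : J.Finite)
    (hJS : ∀ p ∈ J, ∃ d, T.τ^[d] p ∈ range T.a ∪ range T.b)
    (hconc : ConcaveOffKinks J fun t => ∫ x in 0..t, g x) :
    ∀ᶠ n in atTop, ∃ h : ℝ → ℝ, AntitoneOn h (Icc 0 1) ∧ (∀ x ∈ Icc (0:ℝ) 1, 0 ≤ h x) ∧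
      h =ᵐ[volume.restrict (Icc 0 1)] P^[n] g :=
  (hP.eventually_concaveOn_primitive_iterate hg hg0 hJ hJS hconc).mono fun n hn =>
    exists_antitoneOn_ae_eq_of_concaveOn_primitive (hP.integrableOn_iterate hg n)
      (hP.ae_nonneg_iterate hg hg0 n) (hP.ae_le_iterate hg hC hgC n) hn

theorem eLpNorm_top_iterate_succ_le (hP : T.IsFrobeniusPerron P) {α D : ℝ}
    (hLY : HasLasotaYorkeBound P α D)
    (hg : IntegrableOn g (Icc 0 1)) (hg1 : ∫ x in Icc 0 1, g x = 1) {n : ℕ} {h : ℝ → ℝ}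
    (hanti : AntitoneOn h (Icc 0 1)) (h0 : ∀ x ∈ Icc (0:ℝ) 1, 0 ≤ h x)
    (hae : h =ᵐ[volume.restrict (Icc 0 1)] P^[n] g) :
    eLpNorm (P^[n] g) ⊤ (volume.restrict (Icc 0 1)) < ⊤ ∧
      eLpNorm (P^[n + 1] g) ⊤ (volume.restrict (Icc 0 1)) ≤
        ENNReal.ofReal α * eLpNorm (P^[n] g) ⊤ (volume.restrict (Icc 0 1)) + ENNReal.ofReal D := by
  have hint : IntegrableOn h (Icc 0 1) := (hP.integrableOn_iterate hg n).congr_fun_ae hae.symm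
  have hfin := eLpNorm_top_lt_top_of_antitoneOn hint hanti h0
  have hstep := hLY h h0 hanti hint hfin
  rw [eLpNorm_one_restrict_eq_ofReal_integral measurableSet_Icc hint h0, integral_congr_ae hae,
    hP.integral_iterate hg, hg1,
    ENNReal.ofReal_one, mul_one, eLpNorm_congr_ae hae,
    eLpNorm_congr_ae (hP.congr_ae hint (hP.integrableOn_iterate hg n) hae)] at hstep
  rw [eLpNorm_congr_ae hae] at hfin
  rw [Function.iterate_succ_apply']
  exact ⟨hfin, hstep⟩

theorem eventually_ae_le_of_lasotaYorke (hP : T.IsFrobeniusPerron P) {α D : ℝ} (hα0 : 0 ≤ α)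
    (hα1 : α < 1) (hD : 0 ≤ D)
    (hLY : HasLasotaYorkeBound P α D)
    (hg : IntegrableOn g (Icc 0 1)) (hg1 : ∫ x in Icc 0 1, g x = 1)
    (hrep : ∀ᶠ n in atTop, ∃ h : ℝ → ℝ, AntitoneOn h (Icc 0 1) ∧ (∀ x ∈ Icc (0:ℝ) 1, 0 ≤ h x) ∧
      h =ᵐ[volume.restrict (Icc 0 1)] P^[n] g) :
    ∀ᶠ n in atTop, ∀ᵐ x ∂volume.restrict (Icc 0 1), P^[n] g x ≤ 1 + D / (1 - α) := by
  set B : ℕ → ENNReal := fun n => eLpNorm (P^[n] g) ⊤ (volume.restrict (Icc 0 1))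
  have hstep : ∀ᶠ n in atTop, B n < ⊤ ∧ B (n + 1) ≤ ENNReal.ofReal α * B n + ENNReal.ofReal D :=
    hrep.mono fun n ⟨h, hanti, h0, hae⟩ =>
      hP.eLpNorm_top_iterate_succ_le hLY hg hg1 hanti h0 hae
  have hreal : ∀ᶠ n in atTop, (B (n + 1)).toReal ≤ α * (B n).toReal + D :=
    hstep.mono fun n ⟨hfin, hle⟩ => by
      have := ENNReal.toReal_mono (by finiteness) hle
      rwa [ENNReal.toReal_add (by finiteness) (by finiteness), ENNReal.toReal_mul,
        ENNReal.toReal_ofReal hα0, ENNReal.toReal_ofReal hD] at this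
  filter_upwards [eventually_le_div_add_of_le_mul_add (b := fun n => (B n).toReal) hα0 hα1
    one_pos hreal, hstep] with n hn hn'
  refine ae_le_of_eLpNorm_top_le (by have := sub_pos.2 hα1; positivity) ?_
  calc B n = ENNReal.ofReal (B n).toReal := (ENNReal.ofReal_toReal hn'.1.ne).symm
    _ ≤ ENNReal.ofReal (1 + D / (1 - α)) := ENNReal.ofReal_le_ofReal (by linarith)

end PCT.IsFrobeniusPerron

/-- lower-function construction in the proof of Theorem 2.2.9. Let
`τ ∈ 𝒯` with Frobenius–Perron operator `P`, and constants `α ∈ (0,1)`, `D > 0` with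
`‖P f‖_∞ ≤ α‖f‖_∞ + D‖f‖₁` for all nonnegative non-increasing `f ∈ L¹ ∩ L^∞`; set
`K = 1 + D/(1−α)` and `S = ⋃ₙ τ⁻ⁿ({aᵢ, bᵢ})`. Then for every probability density `f`
which is a finite nonnegative combination `f = Σⱼ cⱼ χ_{Δⱼ}` of indicators of intervals
with endpoints in `S`, there is `n₁` such that for all `n ≥ n₁`,
`P ⁿ f ≥ (1/2)·χ_{[0,1/(2K)]}` a.e. on `I`; i.e. `h = (1/2)·χ_{[0,1/(2K)]}` is a lower
function for `P_τ`. -/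
theorem lower_function_for_frobeniusPerron (T : PCT) (P : (ℝ → ℝ) → (ℝ → ℝ))
    (hP : ∀ f : ℝ → ℝ, MeasureTheory.IntegrableOn f (Set.Icc (0:ℝ) 1) →
      MeasureTheory.IntegrableOn (P f) (Set.Icc (0:ℝ) 1) ∧
      ∀ A : Set ℝ, MeasurableSet A → A ⊆ Set.Icc (0:ℝ) 1 →
        ∫ x in A, P f x = ∫ x in T.τ ⁻¹' A ∩ Set.Icc (0:ℝ) 1, f x)
    (α D : ℝ) (hα0 : 0 < α) (hα1 : α < 1) (hD : 0 < D)
    (hLY : ∀ f : ℝ → ℝ, (∀ x ∈ Set.Icc (0:ℝ) 1, 0 ≤ f x) →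
      AntitoneOn f (Set.Icc (0:ℝ) 1) →
      MeasureTheory.IntegrableOn f (Set.Icc (0:ℝ) 1) →
      MeasureTheory.eLpNorm f ⊤ (volume.restrict (Set.Icc (0:ℝ) 1)) < ⊤ →
      MeasureTheory.eLpNorm (P f) ⊤ (volume.restrict (Set.Icc (0:ℝ) 1)) ≤
        ENNReal.ofReal α * MeasureTheory.eLpNorm f ⊤ (volume.restrict (Set.Icc (0:ℝ) 1)) +
        ENNReal.ofReal D * MeasureTheory.eLpNorm f 1 (volume.restrict (Set.Icc (0:ℝ) 1)))
    (K : ℝ) (hK : K = 1 + D / (1 - α))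
    (S : Set ℝ) (hS : S = ⋃ n : ℕ, T.τ^[n] ⁻¹' (Set.range T.a ∪ Set.range T.b))
    (N : ℕ) (Δ : Fin N → Set ℝ) (cf : Fin N → ℝ) (hcf : ∀ j, 0 ≤ cf j)
    (hΔ : ∀ j, ∃ p q : ℝ, p ∈ S ∧ q ∈ S ∧ Δ j = Set.Icc p q)
    (f : ℝ → ℝ) (hf : f = fun x => ∑ j, cf j * Set.indicator (Δ j) (fun _ => (1:ℝ)) x)
    (hf1 : ∫ x in Set.Icc (0:ℝ) 1, f x = 1) :
    ∃ n₁ : ℕ, ∀ n ≥ n₁,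
      ∀ᵐ x ∂(volume.restrict (Set.Icc (0:ℝ) 1)),
        Set.indicator (Set.Icc (0:ℝ) (1 / (2 * K))) (fun _ => (1:ℝ)/2) x ≤ P^[n] f x := by
  choose p q hpS _ hΔ using hΔ
  obtain rfl : Δ = fun j => Icc (p j) (q j) := funext hΔ
  subst hf hK hS
  have hP' : T.IsFrobeniusPerron P := hP
  have hfI := (integrable_sum_mul_indicator_Icc cf p q).integrableOn (s := Icc 0 1)
  have hf := sum_mul_indicator_Icc_mem_Icc (p := p) (q := q) hcf
  have hf0 : 0 ≤ᵐ[volume.restrict (Icc (0:ℝ) 1)] _ := Eventually.of_forall fun x => (hf x).1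
  have hdepth : ∀ x ∈ range p, ∃ d, T.τ^[d] x ∈ range T.a ∪ range T.b :=
    forall_mem_range.2 fun j => mem_iUnion.1 (hpS j)
  have hrep := hP'.eventually_exists_antitoneOn_ae_eq_iterate hfI hf0 ((hf 0).1.trans (hf 0).2)
    (Eventually.of_forall fun x => (hf x).2) (finite_range p) hdepth
    (concaveOffKinks_primitive_sum_mul_indicator_Icc hcf)
  have hbound := hP'.eventually_ae_le_of_lasotaYorke hα0.le hα1 hD.le hLY hfI hf1 hrep
  obtain ⟨n₁, hn₁⟩ := eventually_atTop.1 (hrep.and hbound)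
  refine ⟨n₁, fun n hn => ?_⟩
  obtain ⟨⟨h, hanti, h0, hae⟩, hle⟩ := hn₁ n hn
  have hhalf := half_le_of_antitoneOn (K := 1 + D / (1 - α))
    (by have := div_nonneg hD.le (sub_pos.2 hα1).le; linarith) hanti
    ((hP'.integrableOn_iterate hfI n).congr_fun_ae hae.symm)
    (by rw [integral_congr_ae hae, hP'.integral_iterate hfI, hf1])
    (by filter_upwards [hae, hle] with x hx hx'; rwa [hx])
  filter_upwards [hae, ae_restrict_mem measurableSet_Icc] with x hx hxI
  rw [← hx]
  exact indicator_apply_le' (hhalf x) fun _ => h0 x hxI
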